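/- arXiv:0801.3404 — 3 statements merged into one kernel-verified Lean document; each statement's English description precedes it below -/
import Mathlib

section
/- Tensor inequality: if f ∈ G_X(ψ₁; a₁, b₁) and g ∈ G_Y(ψ₂; a₂, b₂), a = max(a₁,a₂) < b = min(b₁,b₂), and z(x,y) = f(x)g(y) on the product measure space, then ‖z‖_{G_{X×Y}(ψ₁ψ₂; a, b)} ≤ ‖f‖_{G_X(ψ₁; a₁,b₁)} · ‖g‖_{G_Y(ψ₂; a₂,b₂)}. -/
/-!
For every exponent `p`, Tonelli's theorem factorises `‖f ⊗ g‖_p = ‖f‖_p ‖g‖_p`, and the weight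
splits as `ofReal (ψ₁ ψ₂) ≥ ofReal ψ₁ · ofReal ψ₂`. An exponent in `(max a₁ a₂, min b₁ b₂)` lies in both intervals
`(a₁, b₁)` and `(a₂, b₂)`, so each factor is bounded by the corresponding grand norm.
-/

open MeasureTheory Set ENNReal

/-- Grand Lebesgue functional. -/
noncomputable def GNorm {X : Type*} [MeasurableSpace X] (μ : Measure X)
    (ψ : ℝ → ℝ) (a b : ℝ) (h : X → ℝ) : ℝ≥0∞ :=
  ⨆ p ∈ Set.Ioo a b, eLpNorm h (ENNReal.ofReal p) μ / ENNReal.ofReal (ψ p)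

theorem ENNReal.ofReal_mul_ofReal_le (x y : ℝ) :
    ENNReal.ofReal x * ENNReal.ofReal y ≤ ENNReal.ofReal (x * y) := by
  rcases le_or_gt 0 x with hx | hx
  · rw [ENNReal.ofReal_mul hx]
  · simp [ENNReal.ofReal_of_nonpos hx.le]

theorem ENNReal.mul_div_ofReal_mul_le (a b : ℝ≥0∞) (x y : ℝ) :
    a * b / ENNReal.ofReal (x * y) ≤ a / ENNReal.ofReal x * (b / ENNReal.ofReal y) :=
  calc a * b / ENNReal.ofReal (x * y)
      ≤ a * b / (ENNReal.ofReal x * ENNReal.ofReal y) :=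
        ENNReal.div_le_div_left (ENNReal.ofReal_mul_ofReal_le x y) _
    _ = a / ENNReal.ofReal x * (b / ENNReal.ofReal y) :=
        ENNReal.mul_div_mul_comm (Or.inr ofReal_ne_top) (Or.inl ofReal_ne_top)

namespace MeasureTheory

variable {X Y 𝕜 : Type*} [MeasurableSpace X] [MeasurableSpace Y]
  [NormedRing 𝕜] [NormMulClass 𝕜] {μ : Measure X} {ν : Measure Y} [SFinite ν]
  {f : X → 𝕜} {g : Y → 𝕜}

theorem eLpNorm'_mul_prod (hf : AEStronglyMeasurable f μ) (hg : AEStronglyMeasurable g ν)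
    {q : ℝ} (hq : 0 ≤ q) :
    eLpNorm' (fun z : X × Y => f z.1 * g z.2) q (μ.prod ν) = eLpNorm' f q μ * eLpNorm' g q ν := by
  simp only [eLpNorm'_eq_lintegral_enorm, enorm_mul, ENNReal.mul_rpow_of_nonneg _ _ hq]
  rw [lintegral_prod_mul (hf.enorm.pow_const q) (hg.enorm.pow_const q),
    ENNReal.mul_rpow_of_nonneg _ _ (by positivity)]

theorem eLpNorm_mul_prod (hf : AEStronglyMeasurable f μ) (hg : AEStronglyMeasurable g ν)
    {p : ℝ≥0∞} (hp : p ≠ ∞) :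
    eLpNorm (fun z : X × Y => f z.1 * g z.2) p (μ.prod ν) = eLpNorm f p μ * eLpNorm g p ν := by
  rcases eq_or_ne p 0 with rfl | hp0
  · simp
  simp only [eLpNorm_eq_eLpNorm' hp0 hp]
  exact eLpNorm'_mul_prod hf hg ENNReal.toReal_nonneg

end MeasureTheory

theorem eLpNorm_div_le_GNorm {X : Type*} [MeasurableSpace X] {μ : Measure X} {ψ : ℝ → ℝ}
    {a b p : ℝ} (hp : p ∈ Ioo a b) (h : X → ℝ) :
    eLpNorm h (ENNReal.ofReal p) μ / ENNReal.ofReal (ψ p) ≤ GNorm μ ψ a b h :=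
  le_iSup₂ (f := fun p _ => eLpNorm h (ENNReal.ofReal p) μ / ENNReal.ofReal (ψ p)) p hp

theorem tensor_inequality_general
    {X Y : Type*} [MeasurableSpace X] [MeasurableSpace Y]
    (μ : Measure X) (ν : Measure Y) [SigmaFinite ν]
    (a₁ b₁ a₂ b₂ : ℝ)
    (ψ₁ ψ₂ : ℝ → ℝ)
    (f : X → ℝ) (g : Y → ℝ) (hf : Measurable f) (hg : Measurable g) :
    GNorm (μ.prod ν) (fun p => ψ₁ p * ψ₂ p) (max a₁ a₂) (min b₁ b₂)
        (fun z => f z.1 * g z.2)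
      ≤ GNorm μ ψ₁ a₁ b₁ f * GNorm ν ψ₂ a₂ b₂ g := by
  refine iSup₂_le fun p ⟨hap, hpb⟩ => ?_
  have hp₁ : p ∈ Ioo a₁ b₁ := ⟨(le_max_left _ _).trans_lt hap, hpb.trans_le (min_le_left _ _)⟩
  have hp₂ : p ∈ Ioo a₂ b₂ := ⟨(le_max_right _ _).trans_lt hap, hpb.trans_le (min_le_right _ _)⟩
  calc eLpNorm (fun z => f z.1 * g z.2) (ENNReal.ofReal p) (μ.prod ν)
        / ENNReal.ofReal (ψ₁ p * ψ₂ p)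
      = eLpNorm f (ENNReal.ofReal p) μ * eLpNorm g (ENNReal.ofReal p) ν
        / ENNReal.ofReal (ψ₁ p * ψ₂ p) := by
        rw [eLpNorm_mul_prod hf.aestronglyMeasurable hg.aestronglyMeasurable ofReal_ne_top]
    _ ≤ eLpNorm f (ENNReal.ofReal p) μ / ENNReal.ofReal (ψ₁ p)
        * (eLpNorm g (ENNReal.ofReal p) ν / ENNReal.ofReal (ψ₂ p)) :=
        ENNReal.mul_div_ofReal_mul_le _ _ _ _
    _ ≤ GNorm μ ψ₁ a₁ b₁ f * GNorm ν ψ₂ a₂ b₂ g :=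
        mul_le_mul' (eLpNorm_div_le_GNorm hp₁ f) (eLpNorm_div_le_GNorm hp₂ g)

/-- Tensor inequality: `‖f ⊗ g‖_{G(ψ₁ψ₂; a, b)} ≤ ‖f‖_{G(ψ₁)} ‖g‖_{G(ψ₂)}` on
the product measure space, where `a = max(a₁,a₂)`, `b = min(b₁,b₂)`. -/
theorem tensor_inequality
    {X Y : Type*} [MeasurableSpace X] [MeasurableSpace Y]
    (μ : Measure X) (ν : Measure Y) [SigmaFinite μ] [SigmaFinite ν]
    (a₁ b₁ a₂ b₂ : ℝ) (ha₁ : 1 ≤ a₁) (ha₂ : 1 ≤ a₂)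
    (hab : max a₁ a₂ < min b₁ b₂)
    (ψ₁ ψ₂ : ℝ → ℝ)
    (hψ₁ : ∀ p ∈ Set.Ioo a₁ b₁, 0 < ψ₁ p)
    (hψ₂ : ∀ p ∈ Set.Ioo a₂ b₂, 0 < ψ₂ p)
    (f : X → ℝ) (g : Y → ℝ) (hf : Measurable f) (hg : Measurable g)
    (hfG : GNorm μ ψ₁ a₁ b₁ f ≠ ⊤) (hgG : GNorm ν ψ₂ a₂ b₂ g ≠ ⊤) :
    GNorm (μ.prod ν) (fun p => ψ₁ p * ψ₂ p) (max a₁ a₂) (min b₁ b₂)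
        (fun z => f z.1 * g z.2)
      ≤ GNorm μ ψ₁ a₁ b₁ f * GNorm ν ψ₂ a₂ b₂ g :=
  tensor_inequality_general μ ν a₁ b₁ a₂ b₂ ψ₁ ψ₂ f g hf hg
end

section
/- Power property: if f ∈ G(ψ; a, b) and γ ∈ [a, b] is a constant, and ψ_γ(p) := ψ(γp)^γ, then |f|^γ ∈ G(ψ_γ; a/γ, b/γ) and ‖|f|^γ‖_{G(ψ_γ)} = ‖f‖_{G(ψ)}^γ. -/
open MeasureTheory Set ENNReal

/-!
Raising to the power `γ > 0` is an order isomorphism of `ℝ≥0∞`, so it commutes with suprema,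
and `eLpNorm (|f|^γ) p = (eLpNorm f (γ p))^γ`. Hence each term of the supremum defining
`‖|f|^γ‖_{G(ψ_γ)}` at `p` is the `γ`-th power of the term defining `‖f‖_{G(ψ)}` at `γ p`, and
`p ↦ γ p` maps `(a/γ, b/γ)` onto `(a, b)`.
-/

theorem ENNReal.biSup_rpow {ι : Type*} (s : Set ι) (g : ι → ℝ≥0∞) {γ : ℝ} (hγ : 0 < γ) :
    (⨆ i ∈ s, g i) ^ γ = ⨆ i ∈ s, g i ^ γ :=
  OrderIso.map_iSup₂ (ENNReal.orderIsoRpow γ hγ) _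

theorem biSup_Ioo_div_comp_mul_left {α : Type*} [CompleteLattice α] {γ : ℝ} (hγ : 0 < γ)
    (a b : ℝ) (F : ℝ → α) :
    ⨆ p ∈ Ioo (a / γ) (b / γ), F (γ * p) = ⨆ q ∈ Ioo a b, F q := by
  rw [← iSup_image (f := (γ * ·)), image_mul_left_Ioo hγ, mul_div_cancel₀ _ hγ.ne',
    mul_div_cancel₀ _ hγ.ne']

theorem eLpNorm_abs_rpow_ofReal {X : Type*} [MeasurableSpace X] {μ : Measure X} (f : X → ℝ)
    {p γ : ℝ} (hp : 0 ≤ p) (hγ : 0 < γ) :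
    eLpNorm (fun x => |f x| ^ γ) (ENNReal.ofReal p) μ =
      eLpNorm f (ENNReal.ofReal (γ * p)) μ ^ γ := by
  rw [mul_comm, ENNReal.ofReal_mul hp]
  exact eLpNorm_norm_rpow f hγ

theorem power_property_general
    {X : Type*} [MeasurableSpace X] (μ : Measure X)
    (a b : ℝ) (ha : 1 ≤ a)
    (ψ : ℝ → ℝ)
    (hψpos : ∀ p ∈ Set.Ioo a b, 0 < ψ p)
    (f : X → ℝ)
    (γ : ℝ) (hγ : γ ∈ Set.Icc a b) :
    GNorm μ (fun p => ψ (γ * p) ^ γ) (a / γ) (b / γ) (fun x => |f x| ^ γ)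
      = GNorm μ ψ a b f ^ γ := by
  have hγ0 : 0 < γ := by linarith [hγ.1]
  rw [GNorm, GNorm, ENNReal.biSup_rpow _ _ hγ0,
    ← biSup_Ioo_div_comp_mul_left hγ0 a b
      (fun q => (eLpNorm f (ENNReal.ofReal q) μ / ENNReal.ofReal (ψ q)) ^ γ)]
  refine biSup_congr fun p hp => ?_
  have hγp : γ * p ∈ Ioo a b := ⟨(div_lt_iff₀' hγ0).1 hp.1, (lt_div_iff₀' hγ0).1 hp.2⟩
  have hp0 : 0 ≤ p := (div_pos (by linarith) hγ0).le.trans hp.1.le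
  rw [eLpNorm_abs_rpow_ofReal f hp0 hγ0,
    ← ENNReal.ofReal_rpow_of_nonneg (hψpos _ hγp).le hγ0.le, ENNReal.div_rpow_of_nonneg _ _ hγ0.le]

/-- Power property: if `f ∈ G(ψ; a,b)` and `γ ∈ [a,b]`, with
`ψ_γ(p) = ψ(γp)^γ`, then `‖|f|^γ‖_{G(ψ_γ; a/γ, b/γ)} = ‖f‖_{G(ψ)}^γ`. -/
theorem power_property
    {X : Type*} [MeasurableSpace X] (μ : Measure X) [SigmaFinite μ]
    (a b : ℝ) (ha : 1 ≤ a) (hab : a < b)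
    (ψ : ℝ → ℝ) (hψc : ContinuousOn ψ (Set.Ioo a b))
    (hψpos : ∀ p ∈ Set.Ioo a b, 0 < ψ p)
    (f : X → ℝ) (hf : Measurable f) (hfG : GNorm μ ψ a b f ≠ ⊤)
    (γ : ℝ) (hγ : γ ∈ Set.Icc a b) :
    GNorm μ (fun p => ψ (γ * p) ^ γ) (a / γ) (b / γ) (fun x => |f x| ^ γ)
      = GNorm μ ψ a b f ^ γ :=
  power_property_general μ a b ha ψ hψpos f γ hγ
end

section
/- Equality in the tensor inequality: if ψ₁(p) = |f|_p for all p ∈ (a₁,b₁) and ψ₂(p) = |g|_p for all p ∈ (a₂,b₂), then ‖f‖_{G(ψ₁;a₁,b₁)} = 1, ‖g‖_{G(ψ₂;a₂,b₂)} = 1, and for z(x,y) = f(x)g(y), ‖z‖_{G(ψ₁ψ₂; a, b)} = 1 where a = max(a₁,a₂) < b = min(b₁,b₂), showing Lemma 1 (the tensor inequality) is attained with equality. -/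
open MeasureTheory Set ENNReal

theorem gNorm_eq_one_of_eLpNorm_eq {X : Type*} [MeasurableSpace X] {μ : Measure X}
    {ψ : ℝ → ℝ} {a b : ℝ} {h : X → ℝ} (hab : a < b) (hψ : ∀ p ∈ Ioo a b, 0 < ψ p)
    (hrep : ∀ p ∈ Ioo a b, eLpNorm h (ENNReal.ofReal p) μ = ENNReal.ofReal (ψ p)) :
    GNorm μ ψ a b h = 1 := by
  have hterm : ∀ p ∈ Ioo a b, eLpNorm h (ENNReal.ofReal p) μ / ENNReal.ofReal (ψ p) = 1 :=
    fun p hp => by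
      rw [hrep p hp]
      exact ENNReal.div_self (ENNReal.ofReal_pos.mpr (hψ p hp)).ne' ENNReal.ofReal_ne_top
  calc GNorm μ ψ a b h = ⨆ p ∈ Ioo a b, (1 : ℝ≥0∞) :=
        iSup_congr fun p => iSup_congr (hterm p)
    _ = 1 := biSup_const (nonempty_Ioo.mpr hab)

theorem eLpNorm_prod_mul {X Y 𝕜 : Type*} [MeasurableSpace X] [MeasurableSpace Y]
    [NormedDivisionRing 𝕜] {μ : Measure X} {ν : Measure Y} [SFinite ν] {f : X → 𝕜} {g : Y → 𝕜}
    (hf : AEStronglyMeasurable f μ) (hg : AEStronglyMeasurable g ν) {p : ℝ≥0∞} (hp : p ≠ ∞) :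
    eLpNorm (fun z : X × Y => f z.1 * g z.2) p (μ.prod ν) = eLpNorm f p μ * eLpNorm g p ν := by
  rcases eq_or_ne p 0 with rfl | hp0
  · simp
  simp_rw [eLpNorm_eq_lintegral_rpow_enorm_toReal hp0 hp, enorm_mul,
    ENNReal.mul_rpow_of_nonneg _ _ ENNReal.toReal_nonneg]
  rw [lintegral_prod_mul (hf.enorm.pow_const _) (hg.enorm.pow_const _),
    ENNReal.mul_rpow_of_nonneg _ _ (by positivity)]

theorem tensor_inequality_sharp_general
    {X Y : Type*} [MeasurableSpace X] [MeasurableSpace Y]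
    (μ : Measure X) (ν : Measure Y) [SigmaFinite ν]
    (a₁ b₁ a₂ b₂ : ℝ)
    (hab : max a₁ a₂ < min b₁ b₂)
    (ψ₁ ψ₂ : ℝ → ℝ)
    (hψ₁ : ∀ p ∈ Set.Ioo a₁ b₁, 0 < ψ₁ p)
    (hψ₂ : ∀ p ∈ Set.Ioo a₂ b₂, 0 < ψ₂ p)
    (f : X → ℝ) (g : Y → ℝ) (hf : Measurable f) (hg : Measurable g)
    (hrep₁ : ∀ p ∈ Set.Ioo a₁ b₁,
      eLpNorm f (ENNReal.ofReal p) μ = ENNReal.ofReal (ψ₁ p))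
    (hrep₂ : ∀ p ∈ Set.Ioo a₂ b₂,
      eLpNorm g (ENNReal.ofReal p) ν = ENNReal.ofReal (ψ₂ p)) :
    GNorm μ ψ₁ a₁ b₁ f = 1 ∧ GNorm ν ψ₂ a₂ b₂ g = 1 ∧
    GNorm (μ.prod ν) (fun p => ψ₁ p * ψ₂ p) (max a₁ a₂) (min b₁ b₂)
      (fun z => f z.1 * g z.2) = 1 := by
  have hmem : ∀ p ∈ Ioo (max a₁ a₂) (min b₁ b₂), p ∈ Ioo a₁ b₁ ∧ p ∈ Ioo a₂ b₂ := by
    intro p hp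
    rwa [← mem_inter_iff, Ioo_inter_Ioo]
  have hab₁ : a₁ < b₁ := (le_max_left _ _).trans_lt (hab.trans_le (min_le_left _ _))
  have hab₂ : a₂ < b₂ := (le_max_right _ _).trans_lt (hab.trans_le (min_le_right _ _))
  refine ⟨gNorm_eq_one_of_eLpNorm_eq hab₁ hψ₁ hrep₁, gNorm_eq_one_of_eLpNorm_eq hab₂ hψ₂ hrep₂,
    gNorm_eq_one_of_eLpNorm_eq hab (fun p hp => ?_) (fun p hp => ?_)⟩
  · exact mul_pos (hψ₁ p (hmem p hp).1) (hψ₂ p (hmem p hp).2)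
  · rw [eLpNorm_prod_mul hf.aestronglyMeasurable hg.aestronglyMeasurable ofReal_ne_top,
      hrep₁ p (hmem p hp).1, hrep₂ p (hmem p hp).2, ENNReal.ofReal_mul (hψ₁ p (hmem p hp).1).le]

/-- Equality in the tensor inequality: when `ψ₁(p) = |f|_p` and `ψ₂(p) = |g|_p`,
all three Grand Lebesgue norms equal `1`, so the tensor inequality is attained. -/
theorem tensor_inequality_sharp
    {X Y : Type*} [MeasurableSpace X] [MeasurableSpace Y]
    (μ : Measure X) (ν : Measure Y) [SigmaFinite μ] [SigmaFinite ν]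
    (a₁ b₁ a₂ b₂ : ℝ) (ha₁ : 1 ≤ a₁) (ha₂ : 1 ≤ a₂)
    (hab : max a₁ a₂ < min b₁ b₂)
    (ψ₁ ψ₂ : ℝ → ℝ)
    (hψ₁ : ∀ p ∈ Set.Ioo a₁ b₁, 0 < ψ₁ p)
    (hψ₂ : ∀ p ∈ Set.Ioo a₂ b₂, 0 < ψ₂ p)
    (f : X → ℝ) (g : Y → ℝ) (hf : Measurable f) (hg : Measurable g)
    (hrep₁ : ∀ p ∈ Set.Ioo a₁ b₁,
      eLpNorm f (ENNReal.ofReal p) μ = ENNReal.ofReal (ψ₁ p))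
    (hrep₂ : ∀ p ∈ Set.Ioo a₂ b₂,
      eLpNorm g (ENNReal.ofReal p) ν = ENNReal.ofReal (ψ₂ p)) :
    GNorm μ ψ₁ a₁ b₁ f = 1 ∧ GNorm ν ψ₂ a₂ b₂ g = 1 ∧
    GNorm (μ.prod ν) (fun p => ψ₁ p * ψ₂ p) (max a₁ a₂) (min b₁ b₂)
      (fun z => f z.1 * g z.2) = 1 :=
  tensor_inequality_sharp_general μ ν a₁ b₁ a₂ b₂ hab ψ₁ ψ₂ hψ₁ hψ₂ f g hf hg hrep₁ hrep₂
end
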